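/- Two triangles in the projective plane cannot be perspective from exactly five lines: if two triangles with nine distinct pairwise intersection points are perspective from five lines corresponding to five distinct permutations in S_3, then they are perspective from a sixth line realizing the remaining permutation. -/
import Mathlib


/-- The complex projective plane, as the projectivization of `ℂ³`. By duality, lines in the
plane are also represented by elements of `P2` (their coefficient vectors up to scale). -/
noncomputable abbrev P2 := Projectivization ℂ (Fin 3 → ℂ)

/-- The standard bilinear pairing between a point and a line of `P2`. -/
def dotP (v w : Fin 3 → ℂ) : ℂ := v 0 * w 0 + v 1 * w 1 + v 2 * w 2

/-- Incidence: the point `p` lies on the line `l` (both as elements of `P2`, the line via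
its coefficient vector in the dual plane). -/
def PMem (p l : P2) : Prop := dotP p.rep l.rep = 0

/-- Three lines of `P2` are concurrent if some point lies on all three. -/
def Concurrent (l₁ l₂ l₃ : P2) : Prop := ∃ p : P2, PMem p l₁ ∧ PMem p l₂ ∧ PMem p l₃

/-- Three points of `P2` are collinear if some line contains all three. -/
def Collin (p q r : P2) : Prop := ∃ l : P2, PMem p l ∧ PMem q l ∧ PMem r l

/-- A `(k,d)`-net of lines in `P2`, the classes being indexed by `Fin k` and the lines of
each class by `ι`: the `k·d` lines are distinct, and every intersection point of two lines
from distinct classes lies on exactly one line of each class. -/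
def IsNetLines {k : ℕ} {ι : Type*} (ℓ : Fin k → ι → P2) : Prop :=
  Function.Injective (fun x : Fin k × ι => ℓ x.1 x.2) ∧
  ∀ i j : Fin k, i ≠ j → ∀ (a b : ι) (p : P2), PMem p (ℓ i a) → PMem p (ℓ j b) →
    ∀ m : Fin k, ∃! c : ι, PMem p (ℓ m c)

/-- The triangles with intersection points `p i j` are perspective from some line via the
permutation `σ`: the three points `p i (σ i)` are collinear. -/
def PerspFrom (p : Fin 3 → Fin 3 → P2) (σ : Equiv.Perm (Fin 3)) : Prop :=
  ∃ m : P2, ∀ i, PMem (p i (σ i)) m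

def cross (a b : Fin 3 → ℂ) : Fin 3 → ℂ :=
  ![a 1 * b 2 - a 2 * b 1, a 2 * b 0 - a 0 * b 2, a 0 * b 1 - a 1 * b 0]

def det3 (a b c : Fin 3 → ℂ) : ℂ := dotP (cross a b) c

lemma dotP_comm (a b : Fin 3 → ℂ) : dotP a b = dotP b a := by simp [dotP]; ring
lemma dotP_smul (a b : Fin 3 → ℂ) (c : ℂ) : dotP a (c • b) = c * dotP a b := by
  simp [dotP]; ring
lemma dotP_self_cross (a b : Fin 3 → ℂ) : dotP a (cross a b) = 0 := by
  simp [dotP, cross]; ring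
lemma dotP_self_cross' (a b : Fin 3 → ℂ) : dotP b (cross a b) = 0 := by
  simp [dotP, cross]; ring

lemma fn_ext_iff3 (x : Fin 3 → ℂ) : x = 0 ↔ x 0 = 0 ∧ x 1 = 0 ∧ x 2 = 0 := by
  constructor
  · intro h; simp [h]
  · rintro ⟨h0, h1, h2⟩; funext i; fin_cases i <;> simpa

lemma cross_eq_zero_imp {x y : Fin 3 → ℂ} (hx : x ≠ 0) (h : cross x y = 0) :
    ∃ c : ℂ, y = c • x := by
  rw [fn_ext_iff3] at h
  simp only [cross, Matrix.cons_val_zero, Matrix.cons_val_one, Matrix.head_cons,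
    Matrix.cons_val_two, Matrix.tail_cons] at h
  obtain ⟨h0, h1, h2⟩ := h
  have hx' : x 0 ≠ 0 ∨ x 1 ≠ 0 ∨ x 2 ≠ 0 := by
    by_contra hc; push_neg at hc; exact hx ((fn_ext_iff3 x).2 hc)
  rcases hx' with h | h | h
  · refine ⟨y 0 / x 0, ?_⟩
    funext i; fin_cases i <;> simp <;> field_simp
    · linear_combination h2
    · linear_combination -h1
  · refine ⟨y 1 / x 1, ?_⟩
    funext i; fin_cases i <;> simp <;> field_simp
    · linear_combination -h2
    · linear_combination h0
  · refine ⟨y 2 / x 2, ?_⟩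
    funext i; fin_cases i <;> simp <;> field_simp
    · linear_combination h1
    · linear_combination -h0

lemma triple (x a b : Fin 3 → ℂ) :
    cross x (cross a b) = (dotP x b) • a - (dotP x a) • b := by
  funext i; fin_cases i <;> simp [cross, dotP] <;> ring

lemma expand3 (w a b c : Fin 3 → ℂ) :
    (det3 a b c) • w
      = (dotP w a) • cross b c + (dotP w b) • cross c a + (dotP w c) • cross a b := by
  funext i; fin_cases i <;> simp [det3, cross, dotP] <;> ring

lemma det3_smul (a b c : Fin 3 → ℂ) (x y z : ℂ) :
    det3 (x • a) (y • b) (z • c) = x * y * z * det3 a b c := by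
  simp [det3, cross, dotP]; ring

lemma idE (t0 t1 t2 s0 s1 s2 : Fin 3 → ℂ) :
    det3 (cross t0 s0) (cross t1 s1) (cross t2 s2)
      + det3 (cross t0 s1) (cross t1 s2) (cross t2 s0)
      + det3 (cross t0 s2) (cross t1 s0) (cross t2 s1) = 0 := by
  simp [det3, cross, dotP]; ring

lemma idO (t0 t1 t2 s0 s1 s2 : Fin 3 → ℂ) :
    det3 (cross t0 s0) (cross t1 s2) (cross t2 s1)
      + det3 (cross t0 s1) (cross t1 s0) (cross t2 s2)
      + det3 (cross t0 s2) (cross t1 s1) (cross t2 s0) = 0 := by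
  simp [det3, cross, dotP]; ring

open Projectivization in
lemma eq_of_rep_smul {x y : P2} (c : ℂ) (h : y.rep = c • x.rep) : x = y := by
  have hc : c ≠ 0 := by
    rintro rfl
    exact y.rep_nonzero (by simpa using h)
  have : Projectivization.mk ℂ y.rep y.rep_nonzero
      = Projectivization.mk ℂ x.rep x.rep_nonzero := by
    rw [Projectivization.mk_eq_mk_iff]
    exact ⟨Units.mk0 c hc, by simp [h, Units.smul_def]⟩
  rw [Projectivization.mk_rep, Projectivization.mk_rep] at this
  exact this.symm

lemma cross_rep_ne {x y : P2} (h : x ≠ y) : cross x.rep y.rep ≠ 0 := by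
  intro hc
  obtain ⟨c, hcy⟩ := cross_eq_zero_imp x.rep_nonzero hc
  exact h (eq_of_rep_smul c hcy)

lemma pmem_mk (z : P2) (v : Fin 3 → ℂ) (hv : v ≠ 0) :
    PMem z (Projectivization.mk ℂ v hv) ↔ dotP z.rep v = 0 := by
  have h1 : Projectivization.mk ℂ (Projectivization.mk ℂ v hv).rep
      (Projectivization.mk ℂ v hv).rep_nonzero = Projectivization.mk ℂ v hv :=
    Projectivization.mk_rep _
  rw [Projectivization.mk_eq_mk_iff] at h1
  obtain ⟨a, ha⟩ := h1
  unfold PMem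
  rw [← ha, Units.smul_def, dotP_smul]
  simp [Units.ne_zero]

/-- a point orthogonal (as rep) to two non-proportional reps is a multiple of their cross -/
lemma rep_eq_smul_cross {z : P2} {a b : Fin 3 → ℂ} (hab : cross a b ≠ 0)
    (h1 : dotP z.rep a = 0) (h2 : dotP z.rep b = 0) :
    ∃ c : ℂ, c ≠ 0 ∧ z.rep = c • cross a b := by
  have ht : cross z.rep (cross a b) = 0 := by
    rw [triple, h1, h2]; simp
  obtain ⟨c, hc⟩ := cross_eq_zero_imp z.rep_nonzero ht
  have hcne : c ≠ 0 := by rintro rfl; simp at hc; exact hab hc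
  refine ⟨c⁻¹, inv_ne_zero hcne, ?_⟩
  rw [hc, smul_smul, inv_mul_cancel₀ hcne, one_smul]

/-- two distinct points lie on at most one common line -/
lemma line_unique {x y : P2} (hxy : x ≠ y) {l l' : P2}
    (h1 : PMem x l) (h2 : PMem y l) (h3 : PMem x l') (h4 : PMem y l') : l = l' := by
  have hc := cross_rep_ne hxy
  obtain ⟨c, hc0, hcl⟩ := rep_eq_smul_cross hc
    (by rw [dotP_comm]; exact h1) (by rw [dotP_comm]; exact h2)
  obtain ⟨c', hc0', hcl'⟩ := rep_eq_smul_cross hc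
    (by rw [dotP_comm]; exact h3) (by rw [dotP_comm]; exact h4)
  have : l'.rep = (c' * c⁻¹) • l.rep := by
    rw [hcl', hcl, smul_smul]
    congr 1
    field_simp
  exact eq_of_rep_smul _ this

lemma collin_of_det {x y z : P2} (hxy : x ≠ y) (h : det3 x.rep y.rep z.rep = 0) :
    ∃ m : P2, PMem x m ∧ PMem y m ∧ PMem z m := by
  have hc := cross_rep_ne hxy
  refine ⟨Projectivization.mk ℂ _ hc, ?_, ?_, ?_⟩ <;> rw [pmem_mk]
  · exact dotP_self_cross _ _
  · exact dotP_self_cross' _ _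
  · rw [dotP_comm]; exact h

lemma det_of_collin {x y z m : P2} (h1 : PMem x m) (h2 : PMem y m) (h3 : PMem z m) :
    det3 x.rep y.rep z.rep = 0 := by
  have he := expand3 m.rep x.rep y.rep z.rep
  simp only [PMem] at h1 h2 h3
  rw [dotP_comm] at h1 h2 h3
  rw [h1, h2, h3] at he
  simp at he
  rcases he with he | he
  · exact he
  · exact absurd he m.rep_nonzero

/- the six permutations of Fin 3 -/
def c0 : Equiv.Perm (Fin 3) := ⟨![0,1,2], ![0,1,2], by intro x; fin_cases x <;> rfl, by intro x; fin_cases x <;> rfl⟩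
def c1 : Equiv.Perm (Fin 3) := ⟨![1,2,0], ![2,0,1], by intro x; fin_cases x <;> rfl, by intro x; fin_cases x <;> rfl⟩
def c2 : Equiv.Perm (Fin 3) := ⟨![2,0,1], ![1,2,0], by intro x; fin_cases x <;> rfl, by intro x; fin_cases x <;> rfl⟩
def d0 : Equiv.Perm (Fin 3) := ⟨![0,2,1], ![0,2,1], by intro x; fin_cases x <;> rfl, by intro x; fin_cases x <;> rfl⟩
def d1 : Equiv.Perm (Fin 3) := ⟨![1,0,2], ![1,0,2], by intro x; fin_cases x <;> rfl, by intro x; fin_cases x <;> rfl⟩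
def d2 : Equiv.Perm (Fin 3) := ⟨![2,1,0], ![2,1,0], by intro x; fin_cases x <;> rfl, by intro x; fin_cases x <;> rfl⟩

lemma perm_cases (σ : Equiv.Perm (Fin 3)) :
    σ = c0 ∨ σ = c1 ∨ σ = c2 ∨ σ = d0 ∨ σ = d1 ∨ σ = d2 := by
  revert σ; decide

/-- Two triangles cannot be perspective from exactly five lines: if two triangles (each
three non-concurrent distinct lines) with nine distinct pairwise intersection points
`p i j = T i ∩ T' j` are perspective from lines via five distinct permutations of `S₃`,
then they are perspective via the remaining sixth permutation as well. -/
theorem stmt16 (T T' : Fin 3 → P2)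
    (hT : Function.Injective T) (hT' : Function.Injective T')
    (hTnc : ¬ ∃ q : P2, ∀ i, PMem q (T i))
    (hT'nc : ¬ ∃ q : P2, ∀ i, PMem q (T' i))
    (p : Fin 3 → Fin 3 → P2)
    (hp : ∀ i j, PMem (p i j) (T i) ∧ PMem (p i j) (T' j))
    (hdist : Function.Injective (fun x : Fin 3 × Fin 3 => p x.1 x.2))
    (S : Finset (Equiv.Perm (Fin 3))) (hS : S.card = 5)
    (hpersp : ∀ σ ∈ S, PerspFrom p σ) :
    ∀ σ : Equiv.Perm (Fin 3), PerspFrom p σ := by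
  -- distinctness of the nine points, cell-wise
  have pinj : ∀ i j i' j', p i j = p i' j' → i = i' ∧ j = j' := by
    intro i j i' j' h
    have := hdist (a₁ := (i, j)) (a₂ := (i', j')) h
    exact ⟨congrArg Prod.fst this, congrArg Prod.snd this⟩
  -- Step A : no line of T coincides with a line of T'
  have hne : ∀ i j, T i ≠ T' j := by
    intro a b hab
    have hex : ∃ σ ∈ S, σ a ≠ b := by
      by_contra hcon
      push_neg at hcon
      have hsub : S ⊆ Finset.univ.filter (fun σ : Equiv.Perm (Fin 3) => σ a = b) :=
        fun σ hσ => Finset.mem_filter.2 ⟨Finset.mem_univ _, hcon σ hσ⟩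
      have hcard : (Finset.univ.filter (fun σ : Equiv.Perm (Fin 3) => σ a = b)).card ≤ 2 := by
        fin_cases a <;> fin_cases b <;> decide
      have := Finset.card_le_card hsub
      omega
    obtain ⟨σ, hσS, hσab⟩ := hex
    obtain ⟨m, hm⟩ := hpersp σ hσS
    have hσd : σ (σ.symm b) = b := σ.apply_symm_apply b
    set d := σ.symm b with hd
    have hda : d ≠ a := fun h => hσab (by rw [← h]; exact hσd)
    obtain ⟨c, hca, hcd⟩ : ∃ c : Fin 3, c ≠ a ∧ c ≠ d := by
      have : ∀ a d : Fin 3, ∃ c, c ≠ a ∧ c ≠ d := by decide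
      exact this a d
    -- the two points p a (σ a) and p d b are distinct and lie on both m and T a
    have hP : p a (σ a) ≠ p d b := fun h => hda ((pinj _ _ _ _ h).1).symm
    have h1m : PMem (p a (σ a)) m := hm a
    have h2m : PMem (p d b) m := by have := hm d; rwa [hσd] at this
    have h1T : PMem (p a (σ a)) (T a) := (hp a (σ a)).1
    have h2T : PMem (p d b) (T a) := by rw [hab]; exact (hp d b).2
    have hmTa : m = T a := line_unique hP h1m h2m h1T h2T
    -- the third point p c (σ c)
    have h3m : PMem (p c (σ c)) (T' b) := by
      have := hm c; rw [hmTa, hab] at this; exact this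
    have h3T : PMem (p c (σ c)) (T c) := (hp c (σ c)).1
    have h4T : PMem (p c b) (T c) := (hp c b).1
    have h4m : PMem (p c b) (T' b) := (hp c b).2
    have hσcb : σ c ≠ b := fun h => hcd (σ.injective (h.trans hσd.symm))
    have hPP : p c (σ c) ≠ p c b := fun h => hσcb (pinj _ _ _ _ h).2
    have hTcb : T c = T' b := line_unique hPP h3T h4T h3m h4m
    exact hca (hT (hTcb.trans hab.symm))
  -- Step B : representatives of the points are multiples of cross products
  set u : Fin 3 → Fin 3 → (Fin 3 → ℂ) := fun i j => cross (T i).rep (T' j).rep with hu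
  have hune : ∀ i j, u i j ≠ 0 := fun i j => cross_rep_ne (hne i j)
  have hv : ∀ i j, ∃ k : ℂ, k ≠ 0 ∧ (p i j).rep = k • u i j := by
    intro i j
    exact rep_eq_smul_cross (hune i j) ((hp i j).1) ((hp i j).2)
  -- Step C : perspectivity is equivalent to vanishing of a determinant
  have persp_iff : ∀ σ : Equiv.Perm (Fin 3),
      PerspFrom p σ ↔ det3 (u 0 (σ 0)) (u 1 (σ 1)) (u 2 (σ 2)) = 0 := by
    intro σ
    obtain ⟨k0, hk0, he0⟩ := hv 0 (σ 0)
    obtain ⟨k1, hk1, he1⟩ := hv 1 (σ 1)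
    obtain ⟨k2, hk2, he2⟩ := hv 2 (σ 2)
    constructor
    · rintro ⟨m, hm⟩
      have hd := det_of_collin (hm 0) (hm 1) (hm 2)
      rw [he0, he1, he2, det3_smul] at hd
      rcases mul_eq_zero.1 hd with h | h
      · rcases mul_eq_zero.1 h with h' | h'
        · rcases mul_eq_zero.1 h' with h'' | h''
          · exact absurd h'' hk0
          · exact absurd h'' hk1
        · exact absurd h' hk2
      · exact h
    · intro hdet
      have hne01 : p 0 (σ 0) ≠ p 1 (σ 1) := by
        intro h
        exact absurd (pinj _ _ _ _ h).1 (by decide)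
      have hd : det3 (p 0 (σ 0)).rep (p 1 (σ 1)).rep (p 2 (σ 2)).rep = 0 := by
        rw [he0, he1, he2, det3_smul, hdet, mul_zero]
      obtain ⟨m, hm0, hm1, hm2⟩ := collin_of_det hne01 hd
      refine ⟨m, fun i => ?_⟩
      fin_cases i
      · exact hm0
      · exact hm1
      · exact hm2
  -- Step D : combinatorics of the missing permutation
  intro σ
  by_cases hσS : σ ∈ S
  · exact hpersp σ hσS
  have hall : ∀ τ : Equiv.Perm (Fin 3), τ ≠ σ → τ ∈ S := by
    intro τ hτ
    have hc6 : Fintype.card (Equiv.Perm (Fin 3)) = 6 := by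
      rw [Fintype.card_perm]; rfl
    have hcompl : Sᶜ.card = 1 := by
      rw [Finset.card_compl, hc6, hS]
    have hsub : {σ} ⊆ Sᶜ := by
      intro x hx
      rw [Finset.mem_singleton] at hx
      subst hx
      exact Finset.mem_compl.2 hσS
    have heq : ({σ} : Finset (Equiv.Perm (Fin 3))) = Sᶜ :=
      Finset.eq_of_subset_of_card_le hsub (by rw [hcompl, Finset.card_singleton])
    by_contra hτS
    have : τ ∈ Sᶜ := Finset.mem_compl.2 hτS
    rw [← heq, Finset.mem_singleton] at this
    exact hτ this
  have hE0 : ∀ τ : Equiv.Perm (Fin 3), τ ≠ σ →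
      det3 (u 0 (τ 0)) (u 1 (τ 1)) (u 2 (τ 2)) = 0 :=
    fun τ hτ => (persp_iff τ).1 (hpersp τ (hall τ hτ))
  refine (persp_iff σ).2 ?_
  have hidE : det3 (u 0 0) (u 1 1) (u 2 2) + det3 (u 0 1) (u 1 2) (u 2 0)
      + det3 (u 0 2) (u 1 0) (u 2 1) = 0 :=
    idE (T 0).rep (T 1).rep (T 2).rep (T' 0).rep (T' 1).rep (T' 2).rep
  have hidO : det3 (u 0 0) (u 1 2) (u 2 1) + det3 (u 0 1) (u 1 0) (u 2 2)
      + det3 (u 0 2) (u 1 1) (u 2 0) = 0 :=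
    idO (T 0).rep (T 1).rep (T 2).rep (T' 0).rep (T' 1).rep (T' 2).rep
  rcases perm_cases σ with rfl | rfl | rfl | rfl | rfl | rfl
  · have h1 := hE0 c1 (by decide)
    have h2 := hE0 c2 (by decide)
    simp only [c0, c1, c2, Equiv.coe_fn_mk, Matrix.cons_val_zero, Matrix.cons_val_one,
      Matrix.head_cons, Matrix.cons_val_two, Matrix.tail_cons] at h1 h2 ⊢
    linear_combination hidE - h1 - h2
  · have h1 := hE0 c0 (by decide)
    have h2 := hE0 c2 (by decide)
    simp only [c0, c1, c2, Equiv.coe_fn_mk, Matrix.cons_val_zero, Matrix.cons_val_one,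
      Matrix.head_cons, Matrix.cons_val_two, Matrix.tail_cons] at h1 h2 ⊢
    linear_combination hidE - h1 - h2
  · have h1 := hE0 c0 (by decide)
    have h2 := hE0 c1 (by decide)
    simp only [c0, c1, c2, Equiv.coe_fn_mk, Matrix.cons_val_zero, Matrix.cons_val_one,
      Matrix.head_cons, Matrix.cons_val_two, Matrix.tail_cons] at h1 h2 ⊢
    linear_combination hidE - h1 - h2
  · have h1 := hE0 d1 (by decide)
    have h2 := hE0 d2 (by decide)
    simp only [d0, d1, d2, Equiv.coe_fn_mk, Matrix.cons_val_zero, Matrix.cons_val_one,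
      Matrix.head_cons, Matrix.cons_val_two, Matrix.tail_cons] at h1 h2 ⊢
    linear_combination hidO - h1 - h2
  · have h1 := hE0 d0 (by decide)
    have h2 := hE0 d2 (by decide)
    simp only [d0, d1, d2, Equiv.coe_fn_mk, Matrix.cons_val_zero, Matrix.cons_val_one,
      Matrix.head_cons, Matrix.cons_val_two, Matrix.tail_cons] at h1 h2 ⊢
    linear_combination hidO - h1 - h2
  · have h1 := hE0 d0 (by decide)
    have h2 := hE0 d1 (by decide)
    simp only [d0, d1, d2, Equiv.coe_fn_mk, Matrix.cons_val_zero, Matrix.cons_val_one,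
      Matrix.head_cons, Matrix.cons_val_two, Matrix.tail_cons] at h1 h2 ⊢
    linear_combination hidO - h1 - h2
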